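/- Let p, s, q, t ∈ ℝ^n be vectors with nonnegative entries such that p ≺ s and q ≺ t. Then the entrywise vector sum satisfies p + q ≺ s↓ + t↓, where s↓ and t↓ are the descending rearrangements of s and t. -/
import Mathlib


open scoped BigOperators ComplexOrder

/-- The descending rearrangement `v↓` of a vector `v ∈ ℝⁿ`. -/
noncomputable def descSort {n : ℕ} (v : Fin n → ℝ) : Fin n → ℝ :=
  fun i => v (Tuple.sort v i.rev)

/-- The sum of the `k` largest entries of `v`. -/
noncomputable def sumTop {n : ℕ} (v : Fin n → ℝ) (k : ℕ) : ℝ :=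
  ∑ i ∈ Finset.univ.filter (fun i : Fin n => (i : ℕ) < k), descSort v i

/-- Majorization `v ≺ w`: for every `k`, the sum of the `k` largest entries of `v` is at
most that of `w`, and the total sums agree. -/
noncomputable def Majorizes {n : ℕ} (v w : Fin n → ℝ) : Prop :=
  (∀ k : ℕ, sumTop v k ≤ sumTop w k) ∧ (∑ i, v i = ∑ i, w i)

/-- Weak majorization `v ≺_w w`: only the partial-sum inequalities are required. -/
noncomputable def WeakMajorizes {n : ℕ} (v w : Fin n → ℝ) : Prop :=
  ∀ k : ℕ, sumTop v k ≤ sumTop w k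

/- ### Auxiliary lemmas -/

private lemma strictMono_fin_le {m n : ℕ} (f : Fin m → Fin n) (hf : StrictMono f)
    (k : Fin m) : (k : ℕ) ≤ f k := by
  obtain ⟨j, hj⟩ := k
  induction j with
  | zero => simp
  | succ i ih =>
    have h1 : f ⟨i, Nat.lt_of_succ_lt hj⟩ < f ⟨i + 1, hj⟩ := hf (by simp [Fin.lt_def])
    have h2 := ih (Nat.lt_of_succ_lt hj)
    simp only [Fin.lt_def, Fin.val_mk] at h1 h2 ⊢
    omega

private lemma sum_eq_orderEmb {n m : ℕ} (B : Finset (Fin n)) (h : B.card = m)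
    (d : Fin n → ℝ) : ∑ j ∈ B, d j = ∑ k : Fin m, d (B.orderEmbOfFin h k) := by
  have hset : Finset.univ.map (B.orderEmbOfFin h).toEmbedding = B := by
    ext x
    simp only [Finset.mem_map, Finset.mem_univ, true_and, RelEmbedding.coe_toEmbedding]
    constructor
    · rintro ⟨k, rfl⟩; exact B.orderEmbOfFin_mem h k
    · intro hx
      have : x ∈ Set.range (B.orderEmbOfFin h) := by rw [B.range_orderEmbOfFin h]; exact hx
      exact this
  conv_lhs => rw [← hset]
  rw [Finset.sum_map]
  rfl

private lemma descSort_antitone {n : ℕ} (v : Fin n → ℝ) : Antitone (descSort v) := by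
  intro i j hij
  exact Tuple.monotone_sort v (Fin.rev_le_rev.mpr hij)

private lemma descSort_nonneg {n : ℕ} (v : Fin n → ℝ) (hv : ∀ i, 0 ≤ v i) (i : Fin n) :
    0 ≤ descSort v i := hv _

private lemma sum_descSort {n : ℕ} (v : Fin n → ℝ) : ∑ i, descSort v i = ∑ i, v i :=
  Equiv.sum_comp (Fin.revPerm.trans (Tuple.sort v)) v

/-- For an antitone vector `d`, the sum over any finset `B` is at most the sum over the
initial segment of the same cardinality. -/
private lemma sum_le_initial {n : ℕ} (d : Fin n → ℝ) (hd : Antitone d) (B : Finset (Fin n)) :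
    ∑ j ∈ B, d j ≤ ∑ j ∈ Finset.univ.filter (fun j : Fin n => (j : ℕ) < B.card), d j := by
  set m := B.card with hm
  have hmn : m ≤ n := by
    calc m ≤ Finset.univ.card := Finset.card_le_univ B
    _ = n := by simp
  have hF : Finset.univ.filter (fun j : Fin n => (j : ℕ) < m)
      = Finset.univ.map (Fin.castLEEmb hmn) := by
    ext x
    simp only [Finset.mem_filter, Finset.mem_univ, true_and, Finset.mem_map,
      Fin.castLEEmb_apply]
    constructor
    · intro hx
      exact ⟨⟨x, hx⟩, rfl⟩
    · rintro ⟨k, rfl⟩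
      exact k.isLt
  rw [hF, Finset.sum_map, sum_eq_orderEmb B rfl d]
  apply Finset.sum_le_sum
  intro k _
  apply hd
  rw [Fin.le_def]
  exact strictMono_fin_le _ (B.orderEmbOfFin rfl).strictMono k

private lemma card_filter_lt_le {n k : ℕ} :
    (Finset.univ.filter fun i : Fin n => (i : ℕ) < k).card ≤ k := by
  classical
  calc (Finset.univ.filter fun i : Fin n => (i : ℕ) < k).card
      = ((Finset.univ.filter fun i : Fin n => (i : ℕ) < k).image Fin.val).card :=
        (Finset.card_image_of_injective _ Fin.val_injective).symm
    _ ≤ (Finset.range k).card := by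
        apply Finset.card_le_card
        intro x hx
        simp only [Finset.mem_image, Finset.mem_filter, Finset.mem_univ, true_and,
          Finset.mem_range] at hx ⊢
        obtain ⟨i, hi, rfl⟩ := hx
        exact hi
    _ = k := Finset.card_range k

private lemma sumTop_mono {n : ℕ} (v : Fin n → ℝ) (hv : ∀ i, 0 ≤ v i) {k k' : ℕ}
    (h : k ≤ k') : sumTop v k ≤ sumTop v k' := by
  apply Finset.sum_le_sum_of_subset_of_nonneg
  · intro x hx
    simp only [Finset.mem_filter, Finset.mem_univ, true_and] at hx ⊢
    exact lt_of_lt_of_le hx h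
  · intro i _ _
    exact descSort_nonneg v hv i

/-- The sum of `v` over any finset of cardinality at most `k` is at most the sum of the
`k` largest entries of `v` (for nonnegative `v`). -/
private lemma sum_le_sumTop {n : ℕ} (v : Fin n → ℝ) (hv : ∀ i, 0 ≤ v i)
    (A : Finset (Fin n)) {k : ℕ} (hk : A.card ≤ k) : ∑ i ∈ A, v i ≤ sumTop v k := by
  classical
  set σ := Tuple.sort v with hσ
  have hinj : Function.Injective (fun i : Fin n => (σ.symm i).rev) := by
    intro a b hab
    simpa using congrArg (fun x : Fin n => σ x.rev) hab
  set B := A.image (fun i : Fin n => (σ.symm i).rev) with hB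
  have hBcard : B.card = A.card := Finset.card_image_of_injective _ hinj
  have hsum : ∑ j ∈ B, descSort v j = ∑ i ∈ A, v i := by
    rw [hB, Finset.sum_image (fun a _ b _ h => hinj h)]
    apply Finset.sum_congr rfl
    intro i _
    simp [descSort, hσ]
  calc ∑ i ∈ A, v i = ∑ j ∈ B, descSort v j := hsum.symm
    _ ≤ ∑ j ∈ Finset.univ.filter (fun j : Fin n => (j : ℕ) < B.card), descSort v j :=
        sum_le_initial _ (descSort_antitone v) B
    _ = sumTop v B.card := rfl
    _ ≤ sumTop v k := sumTop_mono v hv (by rw [hBcard]; exact hk)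

/-- If `p ≺ s` and `q ≺ t` in `ℝⁿ`, all vectors having nonnegative
entries, then the entrywise sum satisfies `p + q ≺ s↓ + t↓`. -/
theorem majorizes_add {n : ℕ} (p s q t : Fin n → ℝ)
    (hp : ∀ i, 0 ≤ p i) (hs : ∀ i, 0 ≤ s i) (hq : ∀ i, 0 ≤ q i) (ht : ∀ i, 0 ≤ t i)
    (h1 : Majorizes p s) (h2 : Majorizes q t) :
    Majorizes (fun i => p i + q i) (fun i => descSort s i + descSort t i) := by
  classical
  constructor
  · intro k
    set σ := Tuple.sort (fun i => p i + q i) with hσ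
    set F := Finset.univ.filter (fun i : Fin n => (i : ℕ) < k) with hF
    set T := F.image (fun i : Fin n => σ i.rev) with hT
    have hinj : Function.Injective (fun i : Fin n => σ i.rev) := by
      intro a b hab
      simpa using congrArg (fun x : Fin n => (σ.symm x).rev) hab
    have hTcard : T.card ≤ k := by
      rw [hT, Finset.card_image_of_injective _ hinj]
      exact card_filter_lt_le
    have hstep1 : sumTop (fun i => p i + q i) k = ∑ i ∈ T, (p i + q i) := by
      rw [hT, Finset.sum_image (fun a _ b _ h => hinj h)]
      rfl
    have hstep3 : sumTop s k + sumTop t k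
        ≤ sumTop (fun i => descSort s i + descSort t i) k := by
      have := sum_le_sumTop (fun i => descSort s i + descSort t i)
        (fun i => add_nonneg (descSort_nonneg s hs i) (descSort_nonneg t ht i)) F
        (k := k) card_filter_lt_le
      calc sumTop s k + sumTop t k
          = ∑ i ∈ F, (descSort s i + descSort t i) := by
            rw [Finset.sum_add_distrib]; rfl
        _ ≤ _ := this
    calc sumTop (fun i => p i + q i) k = ∑ i ∈ T, (p i + q i) := hstep1
      _ = ∑ i ∈ T, p i + ∑ i ∈ T, q i := Finset.sum_add_distrib
      _ ≤ sumTop p k + sumTop q k :=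
          add_le_add (sum_le_sumTop p hp T hTcard) (sum_le_sumTop q hq T hTcard)
      _ ≤ sumTop s k + sumTop t k := add_le_add (h1.1 k) (h2.1 k)
      _ ≤ _ := hstep3
  · calc ∑ i, (p i + q i) = ∑ i, p i + ∑ i, q i := Finset.sum_add_distrib
      _ = ∑ i, s i + ∑ i, t i := by rw [h1.2, h2.2]
      _ = ∑ i, descSort s i + ∑ i, descSort t i := by rw [sum_descSort, sum_descSort]
      _ = ∑ i, (descSort s i + descSort t i) := Finset.sum_add_distrib.symm
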